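/- arXiv:1809.02965 — 5 statements merged into one kernel-verified Lean document; each statement's English description precedes it below -/
import Mathlib

section
/- Let n ≥ 1 and let θ, θ′ ∈ ℝ^n with θ_i ≠ 0 for all 1 ≤ i ≤ n. Suppose S is an invertible (n+1)×(n+1) real matrix satisfying S e₁ = e₁, e₁ᵀ S = e₁ᵀ, and S A(θ) = A(θ′) S. Then S is diagonal with S₁₁ = 1 and S_{kk} ∈ {1, −1} for 2 ≤ k ≤ n+1, and |θ_i| = |θ′_i| for every 1 ≤ i ≤ n. (Identifiability of the exchange model without transverse field when measuring X₁ on the single-qubit probe.) -/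
open Matrix

/-- The `(n+1)×(n+1)` system matrix of the exchange model without transverse field:
`A(θ)_{i,i+1} = θ_i`, `A(θ)_{i+1,i} = -θ_i` (1-indexed), all other entries zero. -/
def Amat (n : ℕ) (θ : Fin n → ℝ) : Matrix (Fin (n + 1)) (Fin (n + 1)) ℝ :=
  Matrix.of fun i j =>
    if h : (i : ℕ) + 1 = (j : ℕ) then θ ⟨i, by have := j.isLt; omega⟩
    else if h' : (j : ℕ) + 1 = (i : ℕ) then -θ ⟨j, by have := i.isLt; omega⟩
    else 0

section helpers

variable {n : ℕ} (θ : Fin n → ℝ)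

lemma Amat_apply' (i j : Fin (n+1)) :
    Amat n θ i j = if h : (i : ℕ) + 1 = (j : ℕ) then θ ⟨i, by have := j.isLt; omega⟩
      else if h' : (j : ℕ) + 1 = (i : ℕ) then -θ ⟨j, by have := i.isLt; omega⟩
      else 0 := rfl

lemma Amat_zero {i j : Fin (n+1)} (h1 : (i:ℕ)+1 ≠ (j:ℕ)) (h2 : (j:ℕ)+1 ≠ (i:ℕ)) :
    Amat n θ i j = 0 := by
  rw [Amat_apply', dif_neg h1, dif_neg h2]

lemma Amat_succ {i j : Fin (n+1)} (h1 : (i:ℕ)+1 = (j:ℕ)) (hi : (i:ℕ) < n) :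
    Amat n θ i j = θ ⟨i, hi⟩ := by
  rw [Amat_apply', dif_pos h1]

lemma Amat_pred {i j : Fin (n+1)} (h2 : (j:ℕ)+1 = (i:ℕ)) (hj : (j:ℕ) < n) :
    Amat n θ i j = -θ ⟨j, hj⟩ := by
  rw [Amat_apply', dif_neg (by omega), dif_pos h2]

lemma col_sum (f : Fin (n+1) → ℝ) (k : ℕ) (hk : k < n + 1) :
    ∑ j, f j * Amat n θ j ⟨k, hk⟩ =
      (if h : 0 < k then f ⟨k-1, by omega⟩ * θ ⟨k-1, by omega⟩ else 0) +
      (if h : k < n then f ⟨k+1, by omega⟩ * (-θ ⟨k, h⟩) else 0) := by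
  by_cases h1 : 0 < k <;> by_cases h2 : k < n
  · rw [dif_pos h1, dif_pos h2]
    rw [Finset.sum_eq_add_of_mem (⟨k-1, by omega⟩ : Fin (n+1)) ⟨k+1, by omega⟩
        (Finset.mem_univ _) (Finset.mem_univ _) (Fin.ne_of_val_ne (show k-1 ≠ k+1 by omega))
        (by
          intro c _ hc
          have hc1 : (c:ℕ) ≠ k-1 := fun h => hc.1 (Fin.ext h)
          have hc2 : (c:ℕ) ≠ k+1 := fun h => hc.2 (Fin.ext h)
          rw [Amat_zero θ (show (c:ℕ)+1 ≠ k by omega) (show k+1 ≠ (c:ℕ) by omega), mul_zero])]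
    rw [Amat_succ θ (show (k-1)+1 = k by omega) (show k-1 < n by omega),
      Amat_pred θ (show k+1 = k+1 from rfl) (show k < n from h2)]
  · rw [dif_pos h1, dif_neg h2, add_zero]
    rw [Finset.sum_eq_single_of_mem (⟨k-1, by omega⟩ : Fin (n+1)) (Finset.mem_univ _)
        (by
          intro c _ hc
          have hc1 : (c:ℕ) ≠ k-1 := fun h => hc (Fin.ext h)
          have hck : (c:ℕ) < n+1 := c.isLt
          rw [Amat_zero θ (show (c:ℕ)+1 ≠ k by omega) (show k+1 ≠ (c:ℕ) by omega), mul_zero])]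
    rw [Amat_succ θ (show (k-1)+1 = k by omega) (show k-1 < n by omega)]
  · rw [dif_neg h1, dif_pos h2, zero_add]
    rw [Finset.sum_eq_single_of_mem (⟨k+1, by omega⟩ : Fin (n+1)) (Finset.mem_univ _)
        (by
          intro c _ hc
          have hc2 : (c:ℕ) ≠ k+1 := fun h => hc (Fin.ext h)
          rw [Amat_zero θ (show (c:ℕ)+1 ≠ k by omega) (show k+1 ≠ (c:ℕ) by omega), mul_zero])]
    rw [Amat_pred θ (show k+1 = k+1 from rfl) (show k < n from h2)]
  · rw [dif_neg h1, dif_neg h2, add_zero]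
    exact Finset.sum_eq_zero fun c _ => by
      have hck : (c:ℕ) < n+1 := c.isLt
      rw [Amat_zero θ (show (c:ℕ)+1 ≠ k by omega) (show k+1 ≠ (c:ℕ) by omega), mul_zero]

lemma row_sum (g : Fin (n+1) → ℝ) (k : ℕ) (hk : k < n + 1) :
    ∑ j, Amat n θ ⟨k, hk⟩ j * g j =
      (if h : 0 < k then (-θ ⟨k-1, by omega⟩) * g ⟨k-1, by omega⟩ else 0) +
      (if h : k < n then θ ⟨k, h⟩ * g ⟨k+1, by omega⟩ else 0) := by
  by_cases h1 : 0 < k <;> by_cases h2 : k < n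
  · rw [dif_pos h1, dif_pos h2]
    rw [Finset.sum_eq_add_of_mem (⟨k-1, by omega⟩ : Fin (n+1)) ⟨k+1, by omega⟩
        (Finset.mem_univ _) (Finset.mem_univ _) (Fin.ne_of_val_ne (show k-1 ≠ k+1 by omega))
        (by
          intro c _ hc
          have hc1 : (c:ℕ) ≠ k-1 := fun h => hc.1 (Fin.ext h)
          have hc2 : (c:ℕ) ≠ k+1 := fun h => hc.2 (Fin.ext h)
          rw [Amat_zero θ (show k+1 ≠ (c:ℕ) by omega) (show (c:ℕ)+1 ≠ k by omega), zero_mul])]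
    rw [Amat_pred θ (show (k-1)+1 = k by omega) (show k-1 < n by omega),
      Amat_succ θ (show k+1 = k+1 from rfl) (show k < n from h2)]
  · rw [dif_pos h1, dif_neg h2, add_zero]
    rw [Finset.sum_eq_single_of_mem (⟨k-1, by omega⟩ : Fin (n+1)) (Finset.mem_univ _)
        (by
          intro c _ hc
          have hc1 : (c:ℕ) ≠ k-1 := fun h => hc (Fin.ext h)
          have hck : (c:ℕ) < n+1 := c.isLt
          rw [Amat_zero θ (show k+1 ≠ (c:ℕ) by omega) (show (c:ℕ)+1 ≠ k by omega), zero_mul])]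
    rw [Amat_pred θ (show (k-1)+1 = k by omega) (show k-1 < n by omega)]
  · rw [dif_neg h1, dif_pos h2, zero_add]
    rw [Finset.sum_eq_single_of_mem (⟨k+1, by omega⟩ : Fin (n+1)) (Finset.mem_univ _)
        (by
          intro c _ hc
          have hc2 : (c:ℕ) ≠ k+1 := fun h => hc (Fin.ext h)
          rw [Amat_zero θ (show k+1 ≠ (c:ℕ) by omega) (show (c:ℕ)+1 ≠ k by omega), zero_mul])]
    rw [Amat_succ θ (show k+1 = k+1 from rfl) (show k < n from h2)]
  · rw [dif_neg h1, dif_neg h2, add_zero]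
    exact Finset.sum_eq_zero fun c _ => by
      have hck : (c:ℕ) < n+1 := c.isLt
      rw [Amat_zero θ (show k+1 ≠ (c:ℕ) by omega) (show (c:ℕ)+1 ≠ k by omega), zero_mul]

lemma sum_collapse_right {v w : Fin (n+1) → ℝ} (a : Fin (n+1)) (hw : ∀ j, j ≠ a → w j = 0) :
    ∑ j, v j * w j = v a * w a :=
  Finset.sum_eq_single_of_mem a (Finset.mem_univ a) fun b _ hb => by rw [hw b hb, mul_zero]

lemma sum_collapse_left {v w : Fin (n+1) → ℝ} (a : Fin (n+1)) (hw : ∀ j, j ≠ a → w j = 0) :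
    ∑ j, w j * v j = w a * v a :=
  Finset.sum_eq_single_of_mem a (Finset.mem_univ a) fun b _ hb => by rw [hw b hb, zero_mul]

end helpers

/-- Identifiability of the exchange model without transverse field when measuring `X₁`
on the single qubit probe: any invertible similarity `S` fixing `e₁` on both sides and
intertwining `A(θ)` and `A(θ')` is diagonal with `S₁₁ = 1`, diagonal entries `±1`, and
`|θᵢ| = |θ'ᵢ|` for all `i`. -/
theorem stmt0 (n : ℕ) (hn : 1 ≤ n) (θ θ' : Fin n → ℝ)
    (hθ : ∀ i, θ i ≠ 0)
    (S : Matrix (Fin (n + 1)) (Fin (n + 1)) ℝ) (hS : IsUnit S)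
    (hSe : S.mulVec (Pi.single 0 1) = Pi.single 0 1)
    (heS : Matrix.vecMul (Pi.single 0 1) S = Pi.single 0 1)
    (hSA : S * Amat n θ = Amat n θ' * S) :
    (∀ i j : Fin (n + 1), i ≠ j → S i j = 0) ∧
    S 0 0 = 1 ∧
    (∀ k : Fin (n + 1), k ≠ 0 → S k k = 1 ∨ S k k = -1) ∧
    (∀ i : Fin n, |θ i| = |θ' i|) := by
  classical
  have hmul : ∀ i k : Fin (n+1), ∑ j, S i j * Amat n θ j k = ∑ j, Amat n θ' i j * S j k := by
    intro i k
    have h := congrFun (congrFun hSA i) k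
    simpa [Matrix.mul_apply] using h
  have col0 : ∀ i : Fin (n+1), S i 0 = if i = 0 then 1 else 0 := by
    intro i
    have h := congrFun hSe i
    simpa [Pi.single_apply] using h
  have row0 : ∀ j : Fin (n+1), S 0 j = if j = 0 then 1 else 0 := by
    intro j
    have h := congrFun heS j
    simpa [Pi.single_apply] using h
  have key : ∀ k : ℕ, k < n + 1 → ∀ kk : Fin (n+1), (kk:ℕ) = k →
      (∀ i, i ≠ kk → S i kk = 0) ∧ (∀ j, j ≠ kk → S kk j = 0) ∧
      S kk kk * S kk kk = 1 ∧ (∀ mi : Fin n, (mi:ℕ) + 1 = k → θ mi ^ 2 = θ' mi ^ 2) := by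
    intro k
    induction k using Nat.strong_induction_on with
    | _ k IH =>
      rcases k with _ | m
      · intro hk kk hkk
        obtain rfl : kk = 0 := Fin.ext (by simpa using hkk)
        refine ⟨?_, ?_, ?_, ?_⟩
        · intro i hi; rw [col0 i, if_neg hi]
        · intro j hj; rw [row0 j, if_neg hj]
        · rw [col0 0, if_pos rfl]; norm_num
        · intro mi hmi; omega
      · intro hk kk hkk
        have hmn : m < n := by omega
        have hm1 : m < n + 1 := by omega
        obtain rfl : kk = ⟨m+1, hk⟩ := Fin.ext hkk
        obtain ⟨colm, rowm, hcc, -⟩ := IH m (by omega) (by omega) ⟨m, hm1⟩ rfl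
        have hθm : θ ⟨m, hmn⟩ ≠ 0 := hθ _
        have hc : S ⟨m, hm1⟩ ⟨m, hm1⟩ ≠ 0 := fun h => by simp [h] at hcc
        have colprev : ∀ i : Fin (n+1), 0 < m → i ≠ ⟨m-1, by omega⟩ → S i ⟨m-1, by omega⟩ = 0 := by
          intro i h0 hi
          exact (IH (m-1) (by omega) (by omega) ⟨m-1, by omega⟩ rfl).1 i hi
        have rowprev : ∀ j : Fin (n+1), 0 < m → j ≠ ⟨m-1, by omega⟩ → S ⟨m-1, by omega⟩ j = 0 := by
          intro j h0 hj
          exact (IH (m-1) (by omega) (by omega) ⟨m-1, by omega⟩ rfl).2.1 j hj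
        -- column equation
        have Ecol : ∀ i : Fin (n+1),
            (if h : 0 < m then S i ⟨m-1, by omega⟩ * θ ⟨m-1, by omega⟩ else 0)
              + S i ⟨m+1, hk⟩ * (-θ ⟨m, hmn⟩)
            = Amat n θ' i ⟨m, hm1⟩ * S ⟨m, hm1⟩ ⟨m, hm1⟩ := by
          intro i
          have h := hmul i ⟨m, hm1⟩
          rw [col_sum θ (S i) m hm1, dif_pos hmn,
            sum_collapse_right ⟨m, hm1⟩ (fun j hj => colm j hj)] at h
          exact h
        have colK : ∀ i, i ≠ ⟨m+1, hk⟩ → S i ⟨m+1, hk⟩ = 0 := by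
          intro i hi
          have hiv : (i:ℕ) ≠ m+1 := fun h => hi (Fin.ext h)
          by_cases hip : 0 < m ∧ (i:ℕ) = m-1
          · rw [show i = ⟨m-1, by omega⟩ from Fin.ext hip.2]
            exact rowprev ⟨m+1, hk⟩ hip.1 (Fin.ne_of_val_ne (show m+1 ≠ m-1 by omega))
          · have h := Ecol i
            have hd : (if h : 0 < m then S i ⟨m-1, by omega⟩ * θ ⟨m-1, by omega⟩ else 0) = 0 := by
              by_cases h0 : 0 < m
              · rw [dif_pos h0, colprev i h0 (Fin.ne_of_val_ne (fun hv => hip ⟨h0, hv⟩)), zero_mul]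
              · exact dif_neg h0
            rw [hd, zero_add,
              Amat_zero θ' (show (i:ℕ)+1 ≠ m from fun hv => hip ⟨by omega, by omega⟩)
                (show m+1 ≠ (i:ℕ) by omega), zero_mul] at h
            rcases mul_eq_zero.mp h with h' | h'
            · exact h'
            · exact absurd (neg_eq_zero.mp h') hθm
        have eq1 : θ ⟨m, hmn⟩ * S ⟨m+1, hk⟩ ⟨m+1, hk⟩ = θ' ⟨m, hmn⟩ * S ⟨m, hm1⟩ ⟨m, hm1⟩ := by
          have h := Ecol ⟨m+1, hk⟩
          have hd : (if h : 0 < m then S ⟨m+1, hk⟩ ⟨m-1, by omega⟩ * θ ⟨m-1, by omega⟩ else 0) = 0 := by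
            by_cases h0 : 0 < m
            · rw [dif_pos h0, colprev ⟨m+1, hk⟩ h0 (Fin.ne_of_val_ne (show m+1 ≠ m-1 by omega)), zero_mul]
            · exact dif_neg h0
          rw [hd, zero_add, Amat_pred θ' (show (m:ℕ)+1 = m+1 from rfl) hmn] at h
          linear_combination -h
        have hθ'm : θ' ⟨m, hmn⟩ ≠ 0 := by
          intro h0
          have hKK : S ⟨m+1, hk⟩ ⟨m+1, hk⟩ = 0 := by
            rw [h0, zero_mul] at eq1
            exact (mul_eq_zero.mp eq1).resolve_left hθm
          have hcol : ∀ j, S j ⟨m+1, hk⟩ = 0 := by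
            intro j
            by_cases hj : j = ⟨m+1, hk⟩
            · rw [hj]; exact hKK
            · exact colK j hj
          have hdet := (Matrix.isUnit_iff_isUnit_det S).mp hS
          have h1 : S⁻¹ * S = 1 := Matrix.nonsing_inv_mul S hdet
          have h2 := congrFun (congrFun h1 ⟨m+1, hk⟩) ⟨m+1, hk⟩
          rw [Matrix.mul_apply, Matrix.one_apply_eq,
            Finset.sum_eq_zero (fun j _ => by rw [hcol j, mul_zero])] at h2
          exact zero_ne_one h2
        -- row equation
        have Erow : ∀ j : Fin (n+1),
            S ⟨m, hm1⟩ ⟨m, hm1⟩ * Amat n θ ⟨m, hm1⟩ j =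
              (if h : 0 < m then (-θ' ⟨m-1, by omega⟩) * S ⟨m-1, by omega⟩ j else 0)
                + θ' ⟨m, hmn⟩ * S ⟨m+1, hk⟩ j := by
          intro j
          have h := hmul ⟨m, hm1⟩ j
          rw [sum_collapse_left ⟨m, hm1⟩ (fun j' hj' => rowm j' hj'),
            row_sum θ' (fun j' => S j' j) m hm1, dif_pos hmn] at h
          exact h
        have rowK : ∀ j, j ≠ ⟨m+1, hk⟩ → S ⟨m+1, hk⟩ j = 0 := by
          intro j hj
          have hjv : (j:ℕ) ≠ m+1 := fun h => hj (Fin.ext h)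
          by_cases hjp : 0 < m ∧ (j:ℕ) = m-1
          · rw [show j = ⟨m-1, by omega⟩ from Fin.ext hjp.2]
            exact colprev ⟨m+1, hk⟩ hjp.1 (Fin.ne_of_val_ne (show m+1 ≠ m-1 by omega))
          · have h := Erow j
            have hd : (if h : 0 < m then (-θ' ⟨m-1, by omega⟩) * S ⟨m-1, by omega⟩ j else 0) = 0 := by
              by_cases h0 : 0 < m
              · rw [dif_pos h0, rowprev j h0 (Fin.ne_of_val_ne (fun hv => hjp ⟨h0, hv⟩)), mul_zero]
              · exact dif_neg h0
            rw [hd, zero_add,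
              Amat_zero θ (show m+1 ≠ (j:ℕ) by omega)
                (show (j:ℕ)+1 ≠ m from fun hv => hjp ⟨by omega, by omega⟩), mul_zero] at h
            rcases mul_eq_zero.mp h.symm with h' | h'
            · exact absurd h' hθ'm
            · exact h'
        have eq2 : θ' ⟨m, hmn⟩ * S ⟨m+1, hk⟩ ⟨m+1, hk⟩ = θ ⟨m, hmn⟩ * S ⟨m, hm1⟩ ⟨m, hm1⟩ := by
          have h := Erow ⟨m+1, hk⟩
          have hd : (if h : 0 < m then (-θ' ⟨m-1, by omega⟩) * S ⟨m-1, by omega⟩ ⟨m+1, hk⟩ else 0) = 0 := by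
            by_cases h0 : 0 < m
            · rw [dif_pos h0, rowprev ⟨m+1, hk⟩ h0 (Fin.ne_of_val_ne (show m+1 ≠ m-1 by omega)), mul_zero]
            · exact dif_neg h0
          rw [hd, zero_add, Amat_succ θ (show (m:ℕ)+1 = m+1 from rfl) hmn] at h
          linear_combination -h
        refine ⟨colK, rowK, ?_, ?_⟩
        · have h3 : θ ⟨m, hmn⟩ * θ' ⟨m, hmn⟩ * (S ⟨m+1, hk⟩ ⟨m+1, hk⟩ * S ⟨m+1, hk⟩ ⟨m+1, hk⟩)
              = θ ⟨m, hmn⟩ * θ' ⟨m, hmn⟩ * (S ⟨m, hm1⟩ ⟨m, hm1⟩ * S ⟨m, hm1⟩ ⟨m, hm1⟩) := by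
            linear_combination (θ' ⟨m, hmn⟩ * S ⟨m+1, hk⟩ ⟨m+1, hk⟩) * eq1
              + (θ' ⟨m, hmn⟩ * S ⟨m, hm1⟩ ⟨m, hm1⟩) * eq2
          rw [hcc] at h3
          exact mul_left_cancel₀ (mul_ne_zero hθm hθ'm) h3
        · intro mi hmi
          obtain rfl : mi = ⟨m, hmn⟩ := Fin.ext (show (mi:ℕ) = m by omega)
          have h4 : θ ⟨m, hmn⟩ ^ 2 * S ⟨m, hm1⟩ ⟨m, hm1⟩ = θ' ⟨m, hmn⟩ ^ 2 * S ⟨m, hm1⟩ ⟨m, hm1⟩ := by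
            linear_combination θ' ⟨m, hmn⟩ * eq1 - θ ⟨m, hmn⟩ * eq2
          exact mul_right_cancel₀ hc h4
  refine ⟨?_, ?_, ?_, ?_⟩
  · intro i j hij
    exact (key ↑j j.isLt j rfl).1 i hij
  · have h := col0 0
    simpa using h
  · intro k _
    exact mul_self_eq_one_iff.mp (key ↑k k.isLt k rfl).2.2.1
  · intro i
    have h := (key (↑i+1) (by omega) ⟨↑i+1, by omega⟩ rfl).2.2.2 i rfl
    exact abs_eq_abs.mpr (sq_eq_sq_iff_eq_or_eq_neg.mp h)
end

section
/- For every θ ∈ ℝ^n, the controllability matrix CM = [e₁, A(θ)e₁, A(θ)²e₁, …, A(θ)ⁿe₁] (whose (k+1)-st column is A(θ)^k e₁) is upper triangular with diagonal entries (CM)_{k+1,k+1} = (−1)^k ∏_{i=1}^{k} θ_i for 0 ≤ k ≤ n; consequently det(CM) = ∏_{k=1}^{n} ((−1)^k ∏_{i=1}^{k} θ_i), and CM is invertible whenever θ_i ≠ 0 for all i. -/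
open Matrix

/-- The controllability matrix `CM = [e₁, A(θ)e₁, …, A(θ)ⁿe₁]`, whose `(k+1)`-st column
is `A(θ)^k e₁`. -/
def ctrbM (n : ℕ) (θ : Fin n → ℝ) : Matrix (Fin (n + 1)) (Fin (n + 1)) ℝ :=
  Matrix.of fun i k => ((Amat n θ) ^ (k : ℕ)).mulVec (Pi.single 0 1) i

lemma key (n : ℕ) (θ : Fin n → ℝ) : ∀ k : ℕ,
    (∀ i : Fin (n+1), k < (i:ℕ) → ((Amat n θ)^k).mulVec (Pi.single 0 1) i = 0) ∧
    (∀ h : k < n+1, ((Amat n θ)^k).mulVec (Pi.single 0 1) ⟨k, h⟩ =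
      (-1:ℝ)^k * ∏ i ∈ Finset.univ.filter (fun i : Fin n => (i:ℕ) < k), θ i) := by
  intro k
  induction k with
  | zero =>
    constructor
    · intro i hi
      have : i ≠ 0 := by intro h; subst h; simp at hi
      simp [Pi.single_apply, this]
    · intro h
      have : (⟨0, h⟩ : Fin (n+1)) = 0 := rfl
      simp [this, Pi.single_apply]
  | succ k ih =>
    have step : ∀ i : Fin (n+1), ((Amat n θ)^(k+1)).mulVec (Pi.single 0 1) i
        = ∑ j, Amat n θ i j * ((Amat n θ)^k).mulVec (Pi.single 0 1) j := by
      intro i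
      rw [pow_succ', ← Matrix.mulVec_mulVec]
      simp [Matrix.mulVec, dotProduct]
    constructor
    · intro i hi
      rw [step]
      apply Finset.sum_eq_zero
      intro j _
      by_cases h1 : (i:ℕ) + 1 = (j:ℕ)
      · have : ((Amat n θ)^k).mulVec (Pi.single 0 1) j = 0 := ih.1 j (by omega)
        rw [this, mul_zero]
      · by_cases h2 : (j:ℕ) + 1 = (i:ℕ)
        · have : ((Amat n θ)^k).mulVec (Pi.single 0 1) j = 0 := ih.1 j (by omega)
          rw [this, mul_zero]
        · simp [Amat, h1, h2]
    · intro h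
      rw [step]
      have hk : k < n := by omega
      rw [Finset.sum_eq_single (⟨k, by omega⟩ : Fin (n+1))]
      · have hA : Amat n θ ⟨k+1, h⟩ ⟨k, by omega⟩ = -θ ⟨k, hk⟩ := by
          simp only [Amat, Matrix.of_apply]
          simp
          intro h1
          exact absurd h1 (by omega)
        rw [hA, ih.2 (by omega)]
        have hfil : Finset.univ.filter (fun i : Fin n => (i:ℕ) < k+1)
            = insert ⟨k, hk⟩ (Finset.univ.filter (fun i : Fin n => (i:ℕ) < k)) := by
          ext i
          simp [Fin.ext_iff]
          omega
        rw [hfil, Finset.prod_insert (by simp)]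
        ring
      · intro j _ hj
        by_cases h1 : (k+1 : ℕ) + 1 = (j:ℕ)
        · have : ((Amat n θ)^k).mulVec (Pi.single 0 1) j = 0 := ih.1 j (by omega)
          rw [this, mul_zero]
        · by_cases h2 : (j:ℕ) + 1 = (k+1 : ℕ)
          · exact absurd (Fin.ext (by omega : (j:ℕ) = k)) hj
          · simp only [Amat, Matrix.of_apply]
            rw [dif_neg (by exact_mod_cast h1), dif_neg (by exact_mod_cast h2), zero_mul]
      · intro hmem
        exact absurd (Finset.mem_univ _) hmem

/-- The controllability matrix is upper triangular with diagonal entries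
`(CM)_{k+1,k+1} = (-1)^k ∏_{i=1}^{k} θ_i`; its determinant is the product of these, and
it is invertible whenever all `θ_i ≠ 0`. -/
theorem stmt1 (n : ℕ) (θ : Fin n → ℝ) :
    (∀ i k : Fin (n + 1), (k : ℕ) < (i : ℕ) → ctrbM n θ i k = 0) ∧
    (∀ k : Fin (n + 1), ctrbM n θ k k =
      (-1 : ℝ) ^ (k : ℕ) *
        ∏ i ∈ Finset.univ.filter (fun i : Fin n => (i : ℕ) < (k : ℕ)), θ i) ∧
    ((ctrbM n θ).det = ∏ k : Fin (n + 1),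
      ((-1 : ℝ) ^ (k : ℕ) *
        ∏ i ∈ Finset.univ.filter (fun i : Fin n => (i : ℕ) < (k : ℕ)), θ i)) ∧
    ((∀ i, θ i ≠ 0) → IsUnit (ctrbM n θ)) := by
  have h1 : ∀ i k : Fin (n + 1), (k : ℕ) < (i : ℕ) → ctrbM n θ i k = 0 := by
    intro i k hk
    exact (key n θ k).1 i hk
  have h2 : ∀ k : Fin (n + 1), ctrbM n θ k k =
      (-1 : ℝ) ^ (k : ℕ) *
        ∏ i ∈ Finset.univ.filter (fun i : Fin n => (i : ℕ) < (k : ℕ)), θ i := by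
    intro k
    have := (key n θ k).2 k.isLt
    simpa [ctrbM] using this
  have hdet : (ctrbM n θ).det = ∏ k : Fin (n + 1),
      ((-1 : ℝ) ^ (k : ℕ) *
        ∏ i ∈ Finset.univ.filter (fun i : Fin n => (i : ℕ) < (k : ℕ)), θ i) := by
    rw [Matrix.det_of_upperTriangular (by intro i j hij; exact h1 i j hij)]
    exact Finset.prod_congr rfl fun k _ => h2 k
  refine ⟨h1, h2, hdet, ?_⟩
  intro hθ
  rw [Matrix.isUnit_iff_isUnit_det, hdet, isUnit_iff_ne_zero]
  apply Finset.prod_ne_zero_iff.mpr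
  intro k _
  apply mul_ne_zero
  · exact pow_ne_zero _ (by norm_num)
  · exact Finset.prod_ne_zero_iff.mpr fun i _ => hθ i
end

section
/- Let n ≥ 3 be odd, m = (n+1)/2, and let θ ∈ ℝ^n be such that Ā(θ) is invertible and θ₂ ≠ 0. Then there exist θ′ ∈ ℝ^n, an orthogonal (m−1)×(m−1) matrix N and an orthogonal m×m matrix M such that the block-diagonal matrix S = diag(1, N, M) satisfies S A(θ) = A(θ′) S while |θ′₁| ≠ |θ₁|. (Hence the exchange model with transverse field is unidentifiable when measuring X₁ on the single-qubit probe.) -/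
open Matrix

/-- For `n = 2m-1` (odd), the `m×m` symmetric tridiagonal matrix `Ā(θ)` with
`Ā_{i,i} = θ_{2i-1}` and `Ā_{i,i+1} = Ā_{i+1,i} = -θ_{2i}` (1-indexed). -/
def Abar (m : ℕ) (θ : Fin (2 * m - 1) → ℝ) : Matrix (Fin m) (Fin m) ℝ :=
  Matrix.of fun i j =>
    if i = j then θ ⟨2 * (i : ℕ), by have := i.isLt; omega⟩
    else if h : (i : ℕ) + 1 = (j : ℕ) then -θ ⟨2 * (i : ℕ) + 1, by have := j.isLt; omega⟩
    else if h' : (j : ℕ) + 1 = (i : ℕ) then -θ ⟨2 * (j : ℕ) + 1, by have := i.isLt; omega⟩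
    else 0

/-- The `(n+1)×(n+1)` block matrix `A(θ) = [[0, Ā(θ)], [-Ā(θ), 0]]` (with `n+1 = 2m`,
rows/columns indexed by `Fin m ⊕ Fin m`). -/
def Afull (m : ℕ) (θ : Fin (2 * m - 1) → ℝ) :
    Matrix (Fin m ⊕ Fin m) (Fin m ⊕ Fin m) ℝ :=
  Matrix.fromBlocks 0 (Abar m θ) (-(Abar m θ)) 0

/-- The `m×m` block-diagonal matrix `diag(1, N)` built from an `(m-1)×(m-1)` matrix `N`. -/
def diagOne (m : ℕ) (N : Matrix (Fin (m - 1)) (Fin (m - 1)) ℝ) : Matrix (Fin m) (Fin m) ℝ :=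
  Matrix.of fun i j =>
    if h : (i : ℕ) = 0 ∨ (j : ℕ) = 0 then (if (i : ℕ) = 0 ∧ (j : ℕ) = 0 then 1 else 0)
    else N ⟨(i : ℕ) - 1, by have := i.isLt; omega⟩ ⟨(j : ℕ) - 1, by have := j.isLt; omega⟩

namespace Aux
variable {m : ℕ}

lemma dOne_zz (N : Matrix (Fin m) (Fin m) ℝ) : diagOne (m+1) N 0 0 = 1 := by
  simp [diagOne]

lemma dOne_zs (N : Matrix (Fin m) (Fin m) ℝ) (j : Fin m) : diagOne (m+1) N 0 j.succ = 0 := by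
  simp [diagOne, Fin.val_succ]

lemma dOne_sz (N : Matrix (Fin m) (Fin m) ℝ) (i : Fin m) : diagOne (m+1) N i.succ 0 = 0 := by
  simp [diagOne, Fin.val_succ]

lemma dOne_ss (N : Matrix (Fin m) (Fin m) ℝ) (i j : Fin m) :
    diagOne (m+1) N i.succ j.succ = N i j := by
  simp [diagOne, Fin.val_succ]

end Aux
namespace Aux
variable {m : ℕ}

lemma dOne_mul_zero (N : Matrix (Fin m) (Fin m) ℝ) (B : Matrix (Fin (m+1)) (Fin (m+1)) ℝ)
    (j : Fin (m+1)) : (diagOne (m+1) N * B) 0 j = B 0 j := by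
  simp [Matrix.mul_apply, Fin.sum_univ_succ, dOne_zz, dOne_zs]

lemma dOne_mul_succ (N : Matrix (Fin m) (Fin m) ℝ) (B : Matrix (Fin (m+1)) (Fin (m+1)) ℝ)
    (i : Fin m) (j : Fin (m+1)) :
    (diagOne (m+1) N * B) i.succ j = ∑ k, N i k * B k.succ j := by
  simp [Matrix.mul_apply, Fin.sum_univ_succ, dOne_sz, dOne_ss]

lemma mul_dOneT_zero (B : Matrix (Fin (m+1)) (Fin (m+1)) ℝ) (N : Matrix (Fin m) (Fin m) ℝ)
    (i : Fin (m+1)) : (B * (diagOne (m+1) N)ᵀ) i 0 = B i 0 := by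
  simp [Matrix.mul_apply, Fin.sum_univ_succ, dOne_zz, dOne_zs]

lemma mul_dOneT_succ (B : Matrix (Fin (m+1)) (Fin (m+1)) ℝ) (N : Matrix (Fin m) (Fin m) ℝ)
    (i : Fin (m+1)) (j : Fin m) :
    (B * (diagOne (m+1) N)ᵀ) i j.succ = ∑ k, B i k.succ * N j k := by
  simp [Matrix.mul_apply, Fin.sum_univ_succ, dOne_sz, dOne_ss]

lemma dOne_transpose (N : Matrix (Fin m) (Fin m) ℝ) :
    (diagOne (m+1) N)ᵀ = diagOne (m+1) Nᵀ := by
  ext i j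
  rcases Fin.eq_zero_or_eq_succ i with rfl | ⟨i', rfl⟩ <;>
    rcases Fin.eq_zero_or_eq_succ j with rfl | ⟨j', rfl⟩ <;>
      simp [transpose_apply, dOne_zz, dOne_zs, dOne_sz, dOne_ss]

lemma dOne_mul_dOne (N N' : Matrix (Fin m) (Fin m) ℝ) :
    diagOne (m+1) N * diagOne (m+1) N' = diagOne (m+1) (N * N') := by
  ext i j
  rcases Fin.eq_zero_or_eq_succ i with rfl | ⟨i', rfl⟩ <;>
    rcases Fin.eq_zero_or_eq_succ j with rfl | ⟨j', rfl⟩ <;>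
      simp [dOne_mul_zero, dOne_mul_succ, dOne_zz, dOne_zs, dOne_sz, dOne_ss, Matrix.mul_apply,
        Fin.sum_univ_succ]

lemma dOne_one : diagOne (m+1) (1 : Matrix (Fin m) (Fin m) ℝ) = 1 := by
  ext i j
  rcases Fin.eq_zero_or_eq_succ i with rfl | ⟨i', rfl⟩ <;>
    rcases Fin.eq_zero_or_eq_succ j with rfl | ⟨j', rfl⟩ <;>
      simp [dOne_zz, dOne_zs, dOne_sz, dOne_ss, Matrix.one_apply, Fin.succ_inj,
        Fin.succ_ne_zero]
  exact (Fin.succ_ne_zero _).symm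

end Aux

namespace Aux
variable {m : ℕ}

lemma vecMulVec_mul_vecMulVec (u v w x : Fin m → ℝ) :
    vecMulVec u v * vecMulVec w x = (v ⬝ᵥ w) • vecMulVec u x := by
  ext i j
  simp [Matrix.mul_apply, vecMulVec_apply, dotProduct, Finset.mul_sum, Finset.sum_mul]
  congr 1; ext k; ring

lemma vecMulVec_mulVec' (u v x : Fin m → ℝ) :
    (vecMulVec u v).mulVec x = (v ⬝ᵥ x) • u := by
  ext i
  simp [mulVec, vecMulVec_apply, dotProduct, Finset.mul_sum, Finset.sum_mul]
  congr 1; ext k; ring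

lemma vecMulVec_transpose' (u v : Fin m → ℝ) : (vecMulVec u v)ᵀ = vecMulVec v u := by
  ext i j; simp [vecMulVec_apply, mul_comm]

lemma householder (x : Fin (m+1) → ℝ) :
    ∃ (H : Matrix (Fin (m+1)) (Fin (m+1)) ℝ) (r : ℝ),
      H * Hᵀ = 1 ∧ Hᵀ * H = 1 ∧ H.mulVec x = fun i => if i = 0 then r else 0 := by
  classical
  set e : Fin (m+1) → ℝ := fun i => if i = 0 then 1 else 0 with he
  have hee : e ⬝ᵥ e = 1 := by simp [he, dotProduct, Fin.sum_univ_succ]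
  set r : ℝ := Real.sqrt (x ⬝ᵥ x) with hr
  have hxx : x ⬝ᵥ x = r ^ 2 := by
    rw [hr, sq, Real.mul_self_sqrt]
    exact Finset.sum_nonneg fun i _ => mul_self_nonneg _
  set u : Fin (m+1) → ℝ := x - r • e with hu
  have h1 : u ⬝ᵥ x = x ⬝ᵥ x - r * (e ⬝ᵥ x) := by
    simp [hu, sub_dotProduct, smul_dotProduct]
  have h2 : u ⬝ᵥ u = x ⬝ᵥ x - 2 * r * (e ⬝ᵥ x) + r ^ 2 := by
    simp only [hu, sub_dotProduct, dotProduct_sub, smul_dotProduct, dotProduct_smul,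
      smul_eq_mul]
    rw [dotProduct_comm x e, hee]
    ring
  have hux : u ⬝ᵥ u = 2 * (u ⬝ᵥ x) := by rw [h1, h2]; linarith [hxx]
  by_cases h0 : u ⬝ᵥ u = 0
  · have hu0 : u = 0 := by
      funext i
      have h := (Finset.sum_eq_zero_iff_of_nonneg
        (fun i _ => mul_self_nonneg (u i))).mp h0 i (Finset.mem_univ i)
      have : u i = 0 := by nlinarith
      simpa using this
    have hx : x = r • e := by rwa [hu, sub_eq_zero] at hu0
    refine ⟨1, r, by simp, by simp, ?_⟩
    funext i
    rw [hx]
    by_cases hi : i = 0 <;> simp [he, hi, one_mulVec]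
  · set c : ℝ := 2 / (u ⬝ᵥ u) with hc
    set V : Matrix (Fin (m+1)) (Fin (m+1)) ℝ := vecMulVec u u with hV
    have hsymm : (1 - c • V)ᵀ = 1 - c • V := by
      simp [transpose_sub, transpose_smul, hV, vecMulVec_transpose']
    have hVV : V * V = (u ⬝ᵥ u) • V := by rw [hV, vecMulVec_mul_vecMulVec]
    have hcc : c * c * (u ⬝ᵥ u) = 2 * c := by rw [hc]; field_simp
    have hHH : (1 - c • V) * (1 - c • V) = 1 := by
      have expand : (1 - c • V) * (1 - c • V)
          = 1 - (2 * c) • V + (c * c * (u ⬝ᵥ u)) • V := by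
        simp only [sub_mul, mul_sub, one_mul, mul_one, Matrix.mul_smul, Matrix.smul_mul, hVV]
        module
      rw [expand, hcc]
      module
    refine ⟨1 - c • V, r, ?_, ?_, ?_⟩
    · rw [hsymm]; exact hHH
    · rw [hsymm]; exact hHH
    · have hmv : (1 - c • V).mulVec x = x - (c * (u ⬝ᵥ x)) • u := by
        rw [sub_mulVec, one_mulVec, smul_mulVec, hV, vecMulVec_mulVec', smul_smul]
      have hcu : c * (u ⬝ᵥ x) = 1 := by
        rw [hc]; field_simp; linarith [hux]
      rw [hmv, hcu, one_smul, hu]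
      funext i
      by_cases hi : i = 0 <;> simp [he, hi]
end Aux


namespace Aux

def Tri {m : ℕ} (B : Matrix (Fin m) (Fin m) ℝ) : Prop :=
  ∀ i j : Fin m, (i : ℕ) + 2 ≤ (j : ℕ) → B i j = 0

lemma tri_exists : ∀ (m : ℕ) (B : Matrix (Fin (m+1)) (Fin (m+1)) ℝ), Bᵀ = B →
    ∃ N : Matrix (Fin m) (Fin m) ℝ, N * Nᵀ = 1 ∧ Nᵀ * N = 1 ∧
      Tri (diagOne (m+1) N * B * (diagOne (m+1) N)ᵀ) := by
  intro m
  induction m with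
  | zero =>
    intro B _
    exact ⟨1, by simp, by simp, fun i j hij => by omega⟩
  | succ m IH =>
    intro B hsym
    obtain ⟨H, r, hH1, hH2, hHx⟩ := householder (fun i => B i.succ 0)
    set Q₁ : Matrix (Fin (m+1+1)) (Fin (m+1+1)) ℝ := diagOne (m+1+1) H with hQ₁
    set B₁ : Matrix (Fin (m+1+1)) (Fin (m+1+1)) ℝ := Q₁ * B * Q₁ᵀ with hB₁
    have hB₁symm : B₁ᵀ = B₁ := by
      rw [hB₁, transpose_mul, transpose_mul, transpose_transpose, hsym, Matrix.mul_assoc]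
    have hcol : ∀ i : Fin (m+1), B₁ i.succ 0 = if i = 0 then r else 0 := by
      intro i
      rw [hB₁, mul_dOneT_zero, dOne_mul_succ]
      simpa [mulVec, dotProduct] using congrFun hHx i
    set C : Matrix (Fin (m+1)) (Fin (m+1)) ℝ := Matrix.of (fun i j => B₁ i.succ j.succ) with hC
    have hCsymm : Cᵀ = C := by
      ext i j
      have := congrFun (congrFun hB₁symm i.succ) j.succ
      simpa [hC, transpose_apply] using this
    obtain ⟨N', hN'1, hN'2, hTri⟩ := IH C hCsymm
    set P : Matrix (Fin (m+1)) (Fin (m+1)) ℝ := diagOne (m+1) N' with hP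
    have hP1 : P * Pᵀ = 1 := by
      rw [hP, dOne_transpose, dOne_mul_dOne, hN'1, dOne_one]
    have hP2 : Pᵀ * P = 1 := by
      rw [hP, dOne_transpose, dOne_mul_dOne, hN'2, dOne_one]
    refine ⟨P * H, ?_, ?_, ?_⟩
    · rw [transpose_mul, Matrix.mul_assoc, ← Matrix.mul_assoc H, hH1, Matrix.one_mul, hP1]
    · rw [transpose_mul, Matrix.mul_assoc, ← Matrix.mul_assoc Pᵀ, hP2, Matrix.one_mul, hH2]
    · have hsplit : diagOne (m+1+1) (P * H) = diagOne (m+1+1) P * Q₁ := by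
        rw [hQ₁, dOne_mul_dOne]
      set Q₂ : Matrix (Fin (m+1+1)) (Fin (m+1+1)) ℝ := diagOne (m+1+1) P with hQ₂
      have hT : diagOne (m+1+1) (P * H) * B * (diagOne (m+1+1) (P * H))ᵀ
          = Q₂ * B₁ * Q₂ᵀ := by
        rw [hsplit, transpose_mul, hB₁]
        simp only [Matrix.mul_assoc]
      rw [hT]
      intro i j hij
      rcases Fin.eq_zero_or_eq_succ j with rfl | ⟨j', rfl⟩
      · simp at hij
      rcases Fin.eq_zero_or_eq_succ i with rfl | ⟨i', rfl⟩
      · -- first row, j' ≥ 1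
        have hj' : (j' : ℕ) ≥ 1 := by simpa [Fin.val_succ] using hij
        rw [Matrix.mul_assoc, dOne_mul_zero, mul_dOneT_succ]
        have : ∀ k : Fin (m+1), B₁ 0 k.succ = if k = 0 then r else 0 := by
          intro k
          rw [← hcol k]
          have := congrFun (congrFun hB₁symm k.succ) 0
          simpa [transpose_apply] using this
        simp only [this]
        rw [Fin.sum_univ_succ]
        rcases Fin.eq_zero_or_eq_succ j' with rfl | ⟨j'', rfl⟩
        · simp [Fin.val_succ] at hj'
        · simp [hP, dOne_sz, Fin.succ_ne_zero]
      · -- interior: reduce to hTri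
        have key : (Q₂ * B₁ * Q₂ᵀ) i'.succ j'.succ = (P * C * Pᵀ) i' j' := by
          simp only [hQ₂]
          rw [mul_dOneT_succ]
          simp only [dOne_mul_succ]
          simp [Matrix.mul_apply, transpose_apply, hC]
        rw [key]
        exact hTri i' j' (by simp only [Fin.val_succ] at hij; omega)

end Aux


namespace Aux

lemma conj00 {m : ℕ} (N : Matrix (Fin m) (Fin m) ℝ) (B : Matrix (Fin (m+1)) (Fin (m+1)) ℝ) :
    (diagOne (m+1) N * B * (diagOne (m+1) N)ᵀ) 0 0 = B 0 0 := by
  rw [mul_dOneT_zero, dOne_mul_zero]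

lemma abar_of_tri {m : ℕ} (T : Matrix (Fin (m+1)) (Fin (m+1)) ℝ) (hsym : Tᵀ = T)
    (htri : Tri T) :
    ∃ θ' : Fin (2*(m+1)-1) → ℝ, Abar (m+1) θ' = T ∧ θ' ⟨0, by omega⟩ = T 0 0 := by
  set θ' : Fin (2*(m+1)-1) → ℝ := fun j =>
    if h : (j : ℕ) % 2 = 0 then
      T ⟨(j : ℕ)/2, by have := j.isLt; omega⟩ ⟨(j : ℕ)/2, by have := j.isLt; omega⟩
    else
      -T ⟨(j : ℕ)/2, by have := j.isLt; omega⟩ ⟨(j : ℕ)/2 + 1, by have := j.isLt; omega⟩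
    with hθ'
  have hval : ∀ (a : ℕ) (ha : a < 2*(m+1)-1), θ' ⟨a, ha⟩ =
      if h : a % 2 = 0 then T ⟨a/2, by omega⟩ ⟨a/2, by omega⟩
      else -T ⟨a/2, by omega⟩ ⟨a/2 + 1, by omega⟩ := fun a ha => rfl
  refine ⟨θ', ?_, ?_⟩
  · ext i j
    simp only [Abar, of_apply]
    by_cases h1 : i = j
    · subst h1
      rw [if_pos rfl, hval, dif_pos (by omega)]
      congr 1 <;> exact Fin.ext (show 2*(i:ℕ)/2 = (i:ℕ) by omega)
    · rw [if_neg h1]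
      by_cases h2 : (i : ℕ) + 1 = (j : ℕ)
      · rw [dif_pos h2, hval, dif_neg (by omega), neg_neg]
        congr 1
        · exact Fin.ext (show (2*(i:ℕ)+1)/2 = (i:ℕ) by omega)
        · exact Fin.ext (show (2*(i:ℕ)+1)/2 + 1 = (j:ℕ) by omega)
      · rw [dif_neg h2]
        by_cases h3 : (j : ℕ) + 1 = (i : ℕ)
        · rw [dif_pos h3, hval, dif_neg (by omega), neg_neg]
          have hs := congrFun (congrFun hsym i) j
          rw [transpose_apply] at hs
          rw [← hs]
          congr 1
          · exact Fin.ext (show (2*(j:ℕ)+1)/2 = (j:ℕ) by omega)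
          · exact Fin.ext (show (2*(j:ℕ)+1)/2 + 1 = (i:ℕ) by omega)
        · rw [dif_neg h3]
          have h1' : (i : ℕ) ≠ (j : ℕ) := fun h => h1 (Fin.ext h)
          rcases (by omega : (i:ℕ) + 2 ≤ (j:ℕ) ∨ (j:ℕ) + 2 ≤ (i:ℕ)) with hlt | hgt
          · exact (htri i j hlt).symm
          · have hs := congrFun (congrFun hsym i) j
            rw [transpose_apply] at hs
            rw [← hs]
            exact (htri j i hgt).symm
  · rw [hval 0 (by omega), dif_pos (by omega)]
    rfl


lemma eigen_pick {n : ℕ} (A : Matrix (Fin (n+2)) (Fin (n+2)) ℝ) (hsym : Aᵀ = A)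
    (hUnit : IsUnit A) (h10 : A 1 0 ≠ 0) :
    ∃ (v : Fin (n+2) → ℝ) (lam : ℝ), A.mulVec v = lam • v ∧ v ⬝ᵥ v = 1 ∧ lam ≠ 0 ∧
      v 0 ≠ 0 ∧ lam * (v 0)^2 ≠ A 0 0 := by
  classical
  have hherm : A.IsHermitian := by
    rw [Matrix.IsHermitian, conjTranspose_eq_transpose_of_trivial]
    exact hsym
  set U : Matrix (Fin (n+2)) (Fin (n+2)) ℝ := ↑(hherm.eigenvectorUnitary) with hUdef
  set d : Fin (n+2) → ℝ := hherm.eigenvalues with hd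
  have hsp : A = U * diagonal d * Uᵀ := by
    have := hherm.spectral_theorem
    simpa [Matrix.star_eq_conjTranspose, conjTranspose_eq_transpose_of_trivial,
      RCLike.ofReal_real_eq_id] using this
  have hUU : U * Uᵀ = 1 := by
    have := (Matrix.mem_unitaryGroup_iff).mp hherm.eigenvectorUnitary.2
    simpa [Matrix.star_eq_conjTranspose, conjTranspose_eq_transpose_of_trivial] using this
  have hUtU : Uᵀ * U = 1 := by
    have := (Matrix.mem_unitaryGroup_iff').mp hherm.eigenvectorUnitary.2
    simpa [Matrix.star_eq_conjTranspose, conjTranspose_eq_transpose_of_trivial] using this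
  have hAU : A * U = U * diagonal d := by
    rw [hsp, Matrix.mul_assoc, hUtU, Matrix.mul_one]
  have heig : ∀ k, A.mulVec (fun i => U i k) = d k • (fun i => U i k) := by
    intro k
    funext i
    have h2 : A.mulVec (fun i => U i k) i = (A * U) i k := by
      simp [mulVec, dotProduct, Matrix.mul_apply]
    rw [h2, hAU, mul_diagonal]
    simp [mul_comm]
  have hnorm : ∀ k, (fun i => U i k) ⬝ᵥ (fun i => U i k) = 1 := by
    intro k
    have h := congrFun (congrFun hUtU k) k
    simpa [Matrix.mul_apply, transpose_apply, Matrix.one_apply, dotProduct] using h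
  have hlam : ∀ k, d k ≠ 0 := by
    intro k h0
    have hv := heig k
    rw [h0, zero_smul] at hv
    have hB : (↑hUnit.unit⁻¹ : Matrix _ _ ℝ) * A = 1 := by
      have := hUnit.unit.inv_mul
      rwa [hUnit.unit_spec] at this
    have : (fun i => U i k) = 0 := by
      calc (fun i => U i k) = (1 : Matrix _ _ ℝ).mulVec (fun i => U i k) := by
            rw [one_mulVec]
        _ = (↑hUnit.unit⁻¹ : Matrix _ _ ℝ).mulVec (A.mulVec (fun i => U i k)) := by
            rw [← hB, ← mulVec_mulVec]
        _ = 0 := by rw [hv, mulVec_zero]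
    have h1 := hnorm k
    rw [this] at h1
    simp [dotProduct] at h1
  -- moment identities
  have S1 : ∑ k, (U 0 k)^2 = 1 := by
    have h := congrFun (congrFun hUU 0) 0
    simpa [Matrix.mul_apply, transpose_apply, Matrix.one_apply, sq] using h
  have S2 : ∑ k, U 0 k * U 1 k = 0 := by
    have h := congrFun (congrFun hUU 0) 1
    simpa [Matrix.mul_apply, transpose_apply, Matrix.one_apply] using h
  have S3 : A 0 0 = ∑ k, d k * (U 0 k)^2 := by
    have h := congrFun (congrFun hsp 0) 0
    rw [h, Matrix.mul_apply]
    refine Finset.sum_congr rfl fun k _ => ?_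
    rw [mul_diagonal, transpose_apply]; ring
  have S4 : A 1 0 = ∑ k, d k * U 1 k * U 0 k := by
    have h := congrFun (congrFun hsp 1) 0
    rw [h, Matrix.mul_apply]
    refine Finset.sum_congr rfl fun k _ => ?_
    rw [mul_diagonal, transpose_apply]; ring
  have claim : ∃ k, U 0 k ≠ 0 ∧ d k * (U 0 k)^2 ≠ A 0 0 := by
    by_contra hcon
    push_neg at hcon
    set s : Finset (Fin (n+2)) := Finset.univ.filter (fun k => U 0 k ≠ 0) with hs
    have hmem : ∀ k, k ∈ s ↔ U 0 k ≠ 0 := by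
      intro k; simp [hs]
    have S1' : ∑ k ∈ s, (U 0 k)^2 = 1 := by
      rw [← S1]
      exact Finset.sum_filter_of_ne fun k _ h => by
        intro h0; exact h (by rw [h0]; ring)
    have S2' : ∑ k ∈ s, U 0 k * U 1 k = 0 := by
      rw [← S2]
      exact Finset.sum_filter_of_ne fun k _ h => by
        intro h0; exact h (by rw [h0]; ring)
    have S3' : ∑ k ∈ s, d k * (U 0 k)^2 = A 0 0 := by
      rw [S3]
      exact Finset.sum_filter_of_ne fun k _ h => by
        intro h0; exact h (by rw [h0]; ring)
    have S4' : ∑ k ∈ s, d k * U 1 k * U 0 k = A 1 0 := by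
      rw [S4]
      exact Finset.sum_filter_of_ne fun k _ h => by
        intro h0; exact h (by rw [h0]; ring)
    by_cases ha : A 0 0 = 0
    · obtain ⟨k, hks, -⟩ := Finset.exists_ne_zero_of_sum_ne_zero
        (by rw [S1']; exact one_ne_zero)
      have hk0 : U 0 k ≠ 0 := (hmem k).mp hks
      have := hcon k hk0
      rw [ha] at this
      rcases mul_eq_zero.mp this with h | h
      · exact hlam k h
      · exact hk0 (pow_eq_zero_iff two_ne_zero |>.mp h)
    · have hconst : ∀ k ∈ s, d k * (U 0 k)^2 = A 0 0 := fun k hk => hcon k ((hmem k).mp hk)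
      have hsum : ∑ k ∈ s, d k * (U 0 k)^2 = s.card • A 0 0 := by
        rw [Finset.sum_congr rfl hconst, Finset.sum_const]
      have hcard : (s.card : ℝ) * A 0 0 = A 0 0 := by
        rw [← nsmul_eq_mul, ← hsum, S3']
      have hcard1 : s.card = 1 := by
        have h1 : (s.card : ℝ) = 1 :=
          mul_right_cancel₀ ha (hcard.trans (one_mul (A 0 0)).symm)
        exact_mod_cast h1
      obtain ⟨k₀, hk₀⟩ := Finset.card_eq_one.mp hcard1
      have hk₀s : k₀ ∈ s := by rw [hk₀]; exact Finset.mem_singleton_self k₀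
      have hU0 : U 0 k₀ ≠ 0 := (hmem k₀).mp hk₀s
      have hU1 : U 1 k₀ = 0 := by
        have := S2'
        rw [hk₀, Finset.sum_singleton] at this
        rcases mul_eq_zero.mp this with h | h
        · exact absurd h hU0
        · exact h
      have : A 1 0 = 0 := by
        rw [← S4', hk₀, Finset.sum_singleton, hU1]
        ring
      exact h10 this
  obtain ⟨k, hk0, hkne⟩ := claim
  exact ⟨fun i => U i k, d k, heig k, hnorm k, hlam k, hk0, hkne⟩


end Aux

/-- Unidentifiability of the exchange model with transverse field when measuring `X₁`:
there exist alternative parameters `θ'`, an orthogonal `(m-1)×(m-1)` matrix `N` and an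
orthogonal `m×m` matrix `M` such that `S = diag(1, N, M)` satisfies
`S A(θ) = A(θ') S` while `|θ'₁| ≠ |θ₁|`. -/
theorem stmt2 (m : ℕ) (hm : 2 ≤ m) (θ : Fin (2 * m - 1) → ℝ)
    (hA : IsUnit (Abar m θ)) (hθ2 : θ ⟨1, by omega⟩ ≠ 0) :
    ∃ (θ' : Fin (2 * m - 1) → ℝ) (N : Matrix (Fin (m - 1)) (Fin (m - 1)) ℝ)
      (M : Matrix (Fin m) (Fin m) ℝ),
      N * Nᵀ = 1 ∧ Nᵀ * N = 1 ∧ M * Mᵀ = 1 ∧ Mᵀ * M = 1 ∧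
      Matrix.fromBlocks (diagOne m N) 0 0 M * Afull m θ
        = Afull m θ' * Matrix.fromBlocks (diagOne m N) 0 0 M ∧
      |θ' ⟨0, by omega⟩| ≠ |θ ⟨0, by omega⟩| := by
  classical
  obtain ⟨k, rfl⟩ : ∃ k, m = k + 1 := ⟨m - 1, by omega⟩
  obtain ⟨p, rfl⟩ : ∃ p, k = p + 1 := ⟨k - 1, by omega⟩
  set A : Matrix (Fin (p+1+1)) (Fin (p+1+1)) ℝ := Abar (p+1+1) θ with hA0
  have hsym : Aᵀ = A := by
    ext i j
    simp only [hA0, Abar, transpose_apply, of_apply]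
    by_cases h1 : i = j
    · subst h1; rfl
    · rw [if_neg h1, if_neg (Ne.symm h1)]
      split_ifs <;> first | rfl | omega
  have h10 : A 1 0 ≠ 0 := by
    have hval : A 1 0 = -θ ⟨1, by omega⟩ := by
      simp only [hA0, Abar, of_apply]
      rw [if_neg (by simp [Fin.ext_iff]), dif_neg (by simp), dif_pos (by simp)]
      exact congrArg (fun i => -θ i) (Fin.ext (by simp))
    rw [hval]
    simpa using hθ2
  obtain ⟨v, lam, heig, hv, hlam, hv0, hne⟩ := Aux.eigen_pick A hsym hA h10
  set V : Matrix (Fin (p+1+1)) (Fin (p+1+1)) ℝ := vecMulVec v v with hV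
  have hVsym : Vᵀ = V := by rw [hV, Aux.vecMulVec_transpose']
  have hVV : V * V = V := by rw [hV, Aux.vecMulVec_mul_vecMulVec, hv, one_smul]
  have hRsym : (1 - (2:ℝ) • V)ᵀ = 1 - (2:ℝ) • V := by
    rw [transpose_sub, transpose_one, transpose_smul, hVsym]
  have hRR : (1 - (2:ℝ) • V) * (1 - (2:ℝ) • V) = 1 := by
    simp only [sub_mul, mul_sub, one_mul, mul_one, Matrix.mul_smul, Matrix.smul_mul, hVV]
    module
  have hAV : A * V = lam • V := by
    ext i j
    have h := congrFun heig i
    simp only [mulVec, dotProduct, Pi.smul_apply, smul_eq_mul] at h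
    simp only [hV, Matrix.mul_apply, vecMulVec_apply, Matrix.smul_apply, smul_eq_mul]
    calc ∑ x, A i x * (v x * v j) = (∑ x, A i x * v x) * v j := by
          rw [Finset.sum_mul]; exact Finset.sum_congr rfl fun x _ => by ring
      _ = lam * (v i * v j) := by rw [h]; ring
  have hVA : V * A = lam • V := by
    have h := congrArg Matrix.transpose hAV
    rw [transpose_mul, hsym, hVsym, transpose_smul, hVsym] at h
    exact h
  have hAR : A * (1 - (2:ℝ) • V) = (1 - (2:ℝ) • V) * A := by
    simp only [mul_sub, sub_mul, Matrix.mul_one, Matrix.one_mul, Matrix.mul_smul,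
      Matrix.smul_mul, hAV, hVA]
  have hAtilsym : (A * (1 - (2:ℝ) • V))ᵀ = A * (1 - (2:ℝ) • V) := by
    rw [transpose_mul, hRsym, hsym, hAR]
  have hAtil00 : (A * (1 - (2:ℝ) • V)) 0 0 = A 0 0 - 2*lam*(v 0)^2 := by
    have hexp : A * (1 - (2:ℝ) • V) = A - (2:ℝ) • (lam • V) := by
      rw [mul_sub, Matrix.mul_one, Matrix.mul_smul, hAV]
    rw [hexp]
    simp only [Matrix.sub_apply, Matrix.smul_apply, smul_eq_mul, hV, vecMulVec_apply]
    ring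
  obtain ⟨N, hN1, hN2, hTri⟩ := Aux.tri_exists (p+1) (A * (1 - (2:ℝ) • V)) hAtilsym
  have hP1 : diagOne (p+1+1) N * (diagOne (p+1+1) N)ᵀ = 1 := by
    rw [Aux.dOne_transpose, Aux.dOne_mul_dOne, hN1, Aux.dOne_one]
  have hP2 : (diagOne (p+1+1) N)ᵀ * diagOne (p+1+1) N = 1 := by
    rw [Aux.dOne_transpose, Aux.dOne_mul_dOne, hN2, Aux.dOne_one]
  have hTsym : (diagOne (p+1+1) N * (A * (1 - (2:ℝ) • V)) * (diagOne (p+1+1) N)ᵀ)ᵀ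
      = diagOne (p+1+1) N * (A * (1 - (2:ℝ) • V)) * (diagOne (p+1+1) N)ᵀ := by
    rw [transpose_mul, transpose_mul, transpose_transpose, hAtilsym]
    exact (Matrix.mul_assoc _ _ _).symm
  obtain ⟨θ', hθ'A, hθ'0⟩ := Aux.abar_of_tri _ hTsym hTri
  have hM1 : (diagOne (p+1+1) N * (1 - (2:ℝ) • V))
      * (diagOne (p+1+1) N * (1 - (2:ℝ) • V))ᵀ = 1 := by
    rw [transpose_mul, hRsym, Matrix.mul_assoc, ← Matrix.mul_assoc (1 - (2:ℝ) • V), hRR,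
      Matrix.one_mul, hP1]
  have hM2 : (diagOne (p+1+1) N * (1 - (2:ℝ) • V))ᵀ
      * (diagOne (p+1+1) N * (1 - (2:ℝ) • V)) = 1 := by
    rw [transpose_mul, hRsym, Matrix.mul_assoc, ← Matrix.mul_assoc (diagOne (p+1+1) N)ᵀ, hP2,
      Matrix.one_mul, hRR]
  have hPcol : ∀ X : Matrix (Fin (p+1+1)) (Fin (p+1+1)) ℝ,
      (diagOne (p+1+1) N)ᵀ * (diagOne (p+1+1) N * X) = X := by
    intro X; rw [← Matrix.mul_assoc, hP2, Matrix.one_mul]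
  have E1 : diagOne (p+1+1) N * A = Abar (p+1+1) θ'
      * (diagOne (p+1+1) N * (1 - (2:ℝ) • V)) := by
    rw [hθ'A]
    simp only [Matrix.mul_assoc]
    rw [hPcol, hRR, Matrix.mul_one]
  have E2 : (diagOne (p+1+1) N * (1 - (2:ℝ) • V)) * A = Abar (p+1+1) θ'
      * diagOne (p+1+1) N := by
    rw [hθ'A]
    simp only [Matrix.mul_assoc]
    rw [hP2, Matrix.mul_one, hAR]
  refine ⟨θ', N, diagOne (p+1+1) N * (1 - (2:ℝ) • V), hN1, hN2, hM1, hM2, ?_, ?_⟩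
  · rw [Afull, Afull, fromBlocks_multiply, fromBlocks_multiply]
    simp only [Matrix.mul_zero, Matrix.zero_mul, add_zero, zero_add, Matrix.mul_neg,
      Matrix.neg_mul, neg_zero]
    rw [← hA0, E1, E2]
  · have hth0 : θ ⟨0, by omega⟩ = A 0 0 := by
      have h00 : A 0 0 = θ ⟨2 * ((0 : Fin (p+1+1)) : ℕ), by omega⟩ := by
        simp [hA0, Abar]
      rw [h00]
      exact congrArg θ (Fin.ext (by simp))
    have hθ'val : θ' ⟨0, by omega⟩ = A 0 0 - 2*lam*(v 0)^2 := by
      rw [hθ'0, Aux.conj00, hAtil00]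
    rw [hθ'val, hth0]
    intro habs
    have h2 : (A 0 0 - 2*lam*(v 0)^2)^2 = (A 0 0)^2 := by
      rw [← sq_abs, ← sq_abs (A 0 0), habs]
    have h3 : (4:ℝ) * (lam*(v 0)^2) * (lam*(v 0)^2 - A 0 0) = 0 := by
      linear_combination h2
    rcases mul_eq_zero.mp h3 with h | h
    · rcases mul_eq_zero.mp h with h' | h'
      · norm_num at h'
      · rcases mul_eq_zero.mp h' with h'' | h''
        · exact hlam h''
        · exact hv0 (pow_eq_zero_iff two_ne_zero |>.mp h'')
    · exact hne (by linarith)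
end

section
/- Let Ā and Ā′ be real symmetric m×m matrices such that Ā² and Ā′² have the same characteristic polynomial (i.e. the same eigenvalues with multiplicity). Assume that Ā is invertible, that Ā has m distinct eigenvalues, and that λ + μ ≠ 0 for all (not necessarily distinct) eigenvalues λ, μ of Ā. Then λ′ + μ′ ≠ 0 for all (not necessarily distinct) eigenvalues λ′, μ′ of Ā′; equivalently, the Kronecker sum Ā′ ⊗ I_m + I_m ⊗ Ā′ is invertible. -/
open Matrix Polynomial
open scoped Kronecker

namespace Stmt13Aux

variable {n : Type*} [Fintype n] [DecidableEq n]

lemma charpoly_conj (u : (Matrix n n ℝ)ˣ) (M : Matrix n n ℝ) :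
    ((u : Matrix n n ℝ) * M * (↑u⁻¹ : Matrix n n ℝ)).charpoly = M.charpoly := by
  let f := (C : ℝ →+* ℝ[X]).mapMatrix (m := n)
  have h1 : f ↑u * f ↑u⁻¹ = 1 := by rw [← _root_.map_mul, Units.mul_inv, _root_.map_one]
  have h2 : f ↑u⁻¹ * f ↑u = 1 := by rw [← _root_.map_mul, Units.inv_mul, _root_.map_one]
  have hc : ∀ r' : ℝ[X], Commute (X : ℝ[X]) r' := fun r' => Commute.all _ _
  have hkey : charmatrix ((u : Matrix n n ℝ) * M * (↑u⁻¹ : Matrix n n ℝ))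
      = f ↑u * charmatrix M * f ↑u⁻¹ := by
    simp only [charmatrix, mul_sub, sub_mul, _root_.map_mul]
    congr 1
    rw [mul_assoc, (scalar_commute (X : ℝ[X]) hc (f ↑u⁻¹)).eq, ← mul_assoc, h1, one_mul]
  unfold Matrix.charpoly
  rw [hkey, det_mul, det_mul, mul_comm, ← mul_assoc, ← det_mul, h2, det_one, one_mul]

lemma charmatrix_diagonal (d : n → ℝ) :
    charmatrix (diagonal d) = diagonal fun i => (X : ℝ[X]) - C (d i) := by
  ext i j
  by_cases h : i = j
  · subst h; simp
  · simp [h, charmatrix_apply_ne _ _ _ h, diagonal_apply_ne _ h]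

lemma charpoly_diagonal (d : n → ℝ) :
    (diagonal d).charpoly = ∏ i, ((X : ℝ[X]) - C (d i)) := by
  rw [Matrix.charpoly, charmatrix_diagonal, det_diagonal]

lemma roots_prod (d : n → ℝ) :
    (∏ i, ((X : ℝ[X]) - C (d i))).roots = Finset.univ.val.map d := by
  have : (∏ i, ((X : ℝ[X]) - C (d i)))
      = ((Finset.univ.val.map d).map fun a => (X : ℝ[X]) - C a).prod := by
    rw [Multiset.map_map]; rfl
  rw [this, roots_multiset_prod_X_sub_C]


/-- The eigenvector unitary of a real hermitian matrix, as a unit. -/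
noncomputable def uU {M : Matrix n n ℝ} (hM : M.IsHermitian) : (Matrix n n ℝ)ˣ :=
  ⟨(hM.eigenvectorUnitary : Matrix n n ℝ), star (hM.eigenvectorUnitary : Matrix n n ℝ),
    mem_unitaryGroup_iff.mp hM.eigenvectorUnitary.2,
    mem_unitaryGroup_iff'.mp hM.eigenvectorUnitary.2⟩

lemma spectral_units {M : Matrix n n ℝ} (hM : M.IsHermitian) :
    M = (↑(uU hM) : Matrix n n ℝ) * diagonal hM.eigenvalues * (↑(uU hM)⁻¹ : Matrix n n ℝ) := by
  have h := hM.spectral_theorem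
  rw [RCLike.ofReal_real_eq_id] at h
  exact h

lemma charpoly_hermitian {M : Matrix n n ℝ} (hM : M.IsHermitian) :
    M.charpoly = ∏ i, ((X : ℝ[X]) - C (hM.eigenvalues i)) := by
  conv_lhs => rw [spectral_units hM]
  rw [charpoly_conj, charpoly_diagonal]

lemma charpoly_sq_hermitian {M : Matrix n n ℝ} (hM : M.IsHermitian) :
    (M ^ 2).charpoly = ∏ i, ((X : ℝ[X]) - C (hM.eigenvalues i ^ 2)) := by
  have h : M ^ 2 = (↑(uU hM) : Matrix n n ℝ) * diagonal (fun i => hM.eigenvalues i ^ 2)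
      * (↑(uU hM)⁻¹ : Matrix n n ℝ) := by
    conv_lhs => rw [spectral_units hM]
    rw [pow_two]
    rw [show ((↑(uU hM) : Matrix n n ℝ) * diagonal hM.eigenvalues * (↑(uU hM)⁻¹ : Matrix n n ℝ))
        * ((↑(uU hM) : Matrix n n ℝ) * diagonal hM.eigenvalues * (↑(uU hM)⁻¹ : Matrix n n ℝ))
      = (↑(uU hM) : Matrix n n ℝ) * (diagonal hM.eigenvalues *
          ((↑(uU hM)⁻¹ : Matrix n n ℝ) * (↑(uU hM) : Matrix n n ℝ)) * diagonal hM.eigenvalues)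
          * (↑(uU hM)⁻¹ : Matrix n n ℝ) by noncomm_ring]
    rw [Units.inv_mul, mul_one, diagonal_mul_diagonal,
      show (fun i => hM.eigenvalues i * hM.eigenvalues i) = fun i => hM.eigenvalues i ^ 2
        from funext fun i => (pow_two _).symm]
  rw [h, charpoly_conj, charpoly_diagonal]

lemma eval_charpoly' (M : Matrix n n ℝ) (x : ℝ) :
    M.charpoly.eval x = (x • (1 : Matrix n n ℝ) - M).det := by
  unfold Matrix.charpoly
  rw [← Polynomial.coe_evalRingHom, RingHom.map_det]
  congr 1
  ext i j
  by_cases h : i = j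
  · subst h; simp [Matrix.one_apply]
  · simp [charmatrix_apply_ne _ _ _ h, Matrix.one_apply_ne h, Matrix.sub_apply, Matrix.smul_apply, h]

lemma mem_spectrum_iff' (M : Matrix n n ℝ) (x : ℝ) :
    x ∈ spectrum ℝ M ↔ M.charpoly.eval x = 0 := by
  rw [spectrum.mem_iff, Algebra.algebraMap_eq_smul_one, Matrix.isUnit_iff_isUnit_det,
    isUnit_iff_ne_zero, not_ne_iff, eval_charpoly']

lemma spectrum_hermitian {M : Matrix n n ℝ} (hM : M.IsHermitian) (x : ℝ) :
    x ∈ spectrum ℝ M ↔ ∃ i, hM.eigenvalues i = x := by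
  rw [mem_spectrum_iff', charpoly_hermitian hM, Polynomial.eval_prod, Finset.prod_eq_zero_iff]
  constructor
  · rintro ⟨i, -, hi⟩
    refine ⟨i, ?_⟩
    have h2 : x - hM.eigenvalues i = 0 := by simpa using hi
    linarith
  · rintro ⟨i, hi⟩
    exact ⟨i, Finset.mem_univ i, by simp [← hi]⟩

end Stmt13Aux

open Matrix
open scoped Kronecker


open Matrix
open scoped Kronecker

/-- If real symmetric matrices `Ā` and `Ā'` are such that `Ā²` and `Ā'²` share the same
characteristic polynomial, `Ā` is invertible with `m` distinct eigenvalues, and no two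
eigenvalues of `Ā` sum to zero, then no two eigenvalues of `Ā'` sum to zero;
equivalently, the Kronecker sum `Ā' ⊗ I + I ⊗ Ā'` is invertible. -/
theorem stmt13 (m : ℕ) (A A' : Matrix (Fin m) (Fin m) ℝ)
    (hA : A.IsSymm) (hA' : A'.IsSymm)
    (hchar : (A ^ 2).charpoly = (A' ^ 2).charpoly)
    (hinv : IsUnit A)
    (hdistinct : A.charpoly.roots.toFinset.card = m)
    (hspec : ∀ lam ∈ spectrum ℝ A, ∀ mu ∈ spectrum ℝ A, lam + mu ≠ 0) :
    (∀ lam ∈ spectrum ℝ A', ∀ mu ∈ spectrum ℝ A', lam + mu ≠ 0) ∧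
    IsUnit (A' ⊗ₖ (1 : Matrix (Fin m) (Fin m) ℝ)
      + (1 : Matrix (Fin m) (Fin m) ℝ) ⊗ₖ A') := by
  classical
  have hAh : A.IsHermitian := by
    rw [Matrix.IsHermitian, conjTranspose_eq_transpose_of_trivial]; exact hA
  have hA'h : A'.IsHermitian := by
    rw [Matrix.IsHermitian, conjTranspose_eq_transpose_of_trivial]; exact hA'
  have hfspec : ∀ i, hAh.eigenvalues i ∈ spectrum ℝ A := fun i =>
    hAh.eigenvalues_mem_spectrum_real i
  have hgspec : ∀ i, hA'h.eigenvalues i ∈ spectrum ℝ A' := fun i =>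
    hA'h.eigenvalues_mem_spectrum_real i
  -- multiset equality of squared eigenvalues
  have hms : (Finset.univ : Finset (Fin m)).val.map (fun i => hAh.eigenvalues i ^ 2)
      = (Finset.univ : Finset (Fin m)).val.map (fun i => hA'h.eigenvalues i ^ 2) := by
    have h1 := Stmt13Aux.charpoly_sq_hermitian hAh
    have h2 := Stmt13Aux.charpoly_sq_hermitian hA'h
    rw [h1, h2] at hchar
    have h3 := congrArg Polynomial.roots hchar
    rwa [Stmt13Aux.roots_prod, Stmt13Aux.roots_prod] at h3
  -- f injective
  have hfinj : Function.Injective hAh.eigenvalues := by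
    have hroots : A.charpoly.roots = (Finset.univ : Finset (Fin m)).val.map hAh.eigenvalues := by
      rw [Stmt13Aux.charpoly_hermitian hAh, Stmt13Aux.roots_prod]
    rw [hroots, Multiset.toFinset_map] at hdistinct
    have hcard : ((Finset.univ : Finset (Fin m)).image hAh.eigenvalues).card = (Finset.univ : Finset (Fin m)).card := by
      simpa using hdistinct
    have hinjOn := Finset.injOn_of_card_image_eq hcard
    rw [Finset.coe_univ] at hinjOn
    exact Set.injOn_univ.mp hinjOn
  have hf2inj : Function.Injective (fun i => hAh.eigenvalues i ^ 2) := by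
    intro i j h
    simp only [] at h
    have h2 : (hAh.eigenvalues i - hAh.eigenvalues j)
        * (hAh.eigenvalues i + hAh.eigenvalues j) = 0 := by linear_combination h
    rcases mul_eq_zero.mp h2 with h3 | h3
    · exact hfinj (by linarith)
    · exact absurd h3 (hspec _ (hfspec i) _ (hfspec j))
  have hnodup : ((Finset.univ : Finset (Fin m)).val.map (fun i => hA'h.eigenvalues i ^ 2)).Nodup := by
    rw [← hms]
    exact Multiset.Nodup.map hf2inj (Finset.univ : Finset (Fin m)).nodup
  have hg2injOn : ∀ i j : Fin m, hA'h.eigenvalues i ^ 2 = hA'h.eigenvalues j ^ 2 → i = j := by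
    intro i j h
    exact Multiset.inj_on_of_nodup_map hnodup i (Finset.mem_val.mpr (Finset.mem_univ i))
      j (Finset.mem_val.mpr (Finset.mem_univ j)) h
  have claim1 : ∀ lam ∈ spectrum ℝ A', ∀ mu ∈ spectrum ℝ A', lam + mu ≠ 0 := by
    intro lam hlam mu hmu h0
    obtain ⟨i, hi⟩ := (Stmt13Aux.spectrum_hermitian hA'h lam).mp hlam
    obtain ⟨j, hj⟩ := (Stmt13Aux.spectrum_hermitian hA'h mu).mp hmu
    have hsq : hA'h.eigenvalues i ^ 2 = hA'h.eigenvalues j ^ 2 := by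
      rw [hi, hj]; linear_combination (lam - mu) * h0
    have hij : i = j := hg2injOn i j hsq
    have hlam0 : lam = 0 := by
      rw [← hij, hi] at hj
      linarith
    have h0mem : (0 : ℝ) ∈ (Finset.univ : Finset (Fin m)).val.map (fun i => hAh.eigenvalues i ^ 2) := by
      rw [hms]
      refine Multiset.mem_map.mpr ⟨i, Finset.mem_val.mpr (Finset.mem_univ i), ?_⟩
      rw [hi, hlam0]; ring
    obtain ⟨k, -, hk⟩ := Multiset.mem_map.mp h0mem
    have hfk : hAh.eigenvalues k = 0 := by nlinarith [hk]
    exact ((spectrum.zero_mem_iff (R := ℝ)).mp (hfk ▸ hfspec k)) hinv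
  refine ⟨claim1, ?_⟩
  obtain ⟨V, W, hVW, hWV, hA'eq⟩ : ∃ V W : Matrix (Fin m) (Fin m) ℝ, V * W = 1 ∧ W * V = 1 ∧
      A' = V * diagonal hA'h.eigenvalues * W :=
    ⟨_, _, (Stmt13Aux.uU hA'h).mul_inv, (Stmt13Aux.uU hA'h).inv_mul,
      Stmt13Aux.spectral_units hA'h⟩
  have hone : (1 : Matrix (Fin m) (Fin m) ℝ) = V * 1 * W := by rw [mul_one, hVW]
  have key : A' ⊗ₖ (1 : Matrix (Fin m) (Fin m) ℝ) + (1 : Matrix (Fin m) (Fin m) ℝ) ⊗ₖ A'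
      = (V ⊗ₖ V) * (diagonal (fun p : Fin m × Fin m =>
          hA'h.eigenvalues p.1 + hA'h.eigenvalues p.2)) * (W ⊗ₖ W) := by
    conv_lhs => rw [hA'eq, hone]
    rw [mul_kronecker_mul, mul_kronecker_mul, mul_kronecker_mul, mul_kronecker_mul]
    rw [show (V ⊗ₖ V) * ((diagonal hA'h.eigenvalues) ⊗ₖ (1 : Matrix (Fin m) (Fin m) ℝ))
        * (W ⊗ₖ W) + (V ⊗ₖ V) * ((1 : Matrix (Fin m) (Fin m) ℝ) ⊗ₖ (diagonal hA'h.eigenvalues))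
        * (W ⊗ₖ W)
      = (V ⊗ₖ V) * ((diagonal hA'h.eigenvalues) ⊗ₖ (1 : Matrix (Fin m) (Fin m) ℝ)
        + (1 : Matrix (Fin m) (Fin m) ℝ) ⊗ₖ (diagonal hA'h.eigenvalues)) * (W ⊗ₖ W)
      by noncomm_ring]
    congr 2
    rw [← diagonal_one, diagonal_kronecker_diagonal, diagonal_kronecker_diagonal, diagonal_add]
    congr 1
    ext p
    simp
  rw [key]
  have hdetVV : (V ⊗ₖ V).det * (W ⊗ₖ W).det = 1 := by
    rw [← det_mul, ← mul_kronecker_mul, hVW, one_kronecker_one, det_one]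
  have hVVunit : IsUnit (V ⊗ₖ V) :=
    (isUnit_iff_isUnit_det _).mpr (IsUnit.of_mul_eq_one _ hdetVV)
  have hWWunit : IsUnit (W ⊗ₖ W) :=
    (isUnit_iff_isUnit_det _).mpr (IsUnit.of_mul_eq_one _ (by rw [mul_comm] at hdetVV; exact hdetVV))
  have hdiagunit : IsUnit (diagonal (fun p : Fin m × Fin m =>
      hA'h.eigenvalues p.1 + hA'h.eigenvalues p.2)) := by
    rw [isUnit_iff_isUnit_det, det_diagonal, isUnit_iff_ne_zero]
    exact Finset.prod_ne_zero_iff.mpr fun p _ => claim1 _ (hgspec p.1) _ (hgspec p.2)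
  exact (hVVunit.mul hdiagunit).mul hWWunit
end

section
/- Let A be a d×d real matrix with Frobenius norm ‖A‖, let Δt > 0, and let 𝒩 ≥ 1, q ≥ 1 and 1 ≤ p ≤ 𝒩 be integers. Set w = 𝒩‖A‖Δt·e and z = 1 + max(⌊w⌋, q), so that z > w. Then for all indices i, k: |Σ_{r=q+1}^{∞} (p^r Δt^r / r!) (A^r)_{ik}| ≤ (2π(q+1))^{−1/2} · Σ_{r=q+1}^{z−1} (w/r)^r + (w/z)^z / ((2π(q+1))^{1/2} (1 − w/z)), where the finite sum is understood to be empty if z − 1 < q + 1. In particular the truncation error of the Taylor-expansion identification algorithm is finite. -/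
open Matrix

/-- The Frobenius norm of a real matrix. -/
noncomputable def frob {d : ℕ} (A : Matrix (Fin d) (Fin d) ℝ) : ℝ :=
  Real.sqrt (∑ i, ∑ j, (A i j) ^ 2)

/-- Stirling lower bound for the factorial. -/
lemma stirling_fact_ge (m : ℕ) (hm : 1 ≤ m) :
    Real.sqrt (2 * Real.pi * m) * ((m : ℝ) / Real.exp 1) ^ m ≤ (Nat.factorial m : ℝ) := by
  obtain ⟨n, rfl⟩ : ∃ n, m = n + 1 := ⟨m - 1, (Nat.succ_pred_eq_of_pos hm).symm⟩
  have h : Real.sqrt Real.pi ≤ Stirling.stirlingSeq (n + 1) :=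
    Stirling.stirlingSeq'_antitone.le_of_tendsto
      (Stirling.tendsto_stirlingSeq_sqrt_pi.comp (Filter.tendsto_add_atTop_nat 1)) n
  rw [Stirling.stirlingSeq] at h
  have hm1 : (1:ℝ) ≤ ((n:ℝ) + 1) := by have := n.cast_nonneg (α := ℝ); linarith
  have hden : 0 < Real.sqrt (2 * (↑(n+1))) * ((↑(n+1) : ℝ) / Real.exp 1) ^ (n+1) := by
    have : (0:ℝ) < (↑(n+1) : ℝ) := by positivity
    positivity
  rw [le_div_iff₀ hden] at h
  have heq : Real.sqrt (2 * Real.pi * ↑(n+1)) =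
      Real.sqrt Real.pi * Real.sqrt (2 * ↑(n+1)) := by
    rw [← Real.sqrt_mul Real.pi_pos.le]
    ring_nf
  calc Real.sqrt (2 * Real.pi * ↑(n+1)) * ((↑(n+1) : ℝ) / Real.exp 1) ^ (n+1)
      = Real.sqrt Real.pi * (Real.sqrt (2 * ↑(n+1)) * ((↑(n+1) : ℝ) / Real.exp 1) ^ (n+1)) := by
        rw [heq]; ring
    _ ≤ (Nat.factorial (n+1) : ℝ) := h

lemma frob_entry_le {d : ℕ} (A : Matrix (Fin d) (Fin d) ℝ) (i k : Fin d) :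
    |A i k| ≤ frob A := by
  rw [← Real.sqrt_sq_eq_abs]
  apply Real.sqrt_le_sqrt
  calc (A i k) ^ 2 ≤ ∑ j, (A i j) ^ 2 :=
        Finset.single_le_sum (f := fun j => (A i j) ^ 2) (fun j _ => sq_nonneg _) (Finset.mem_univ k)
    _ ≤ ∑ i', ∑ j, (A i' j) ^ 2 :=
        Finset.single_le_sum (f := fun i' => ∑ j, (A i' j) ^ 2) (fun i' _ => Finset.sum_nonneg fun j _ => sq_nonneg _)
          (Finset.mem_univ i)

section FrobNorm
attribute [local instance] Matrix.frobeniusSeminormedAddCommGroup Matrix.frobeniusNormedRing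

lemma frob_eq_norm {d : ℕ} (A : Matrix (Fin d) (Fin d) ℝ) : frob A = ‖A‖ := by
  rw [frob, Matrix.frobenius_norm_def, Real.sqrt_eq_rpow]
  congr 1
  simp [Real.rpow_two, Real.norm_eq_abs, sq_abs]

lemma frob_pow_le {d : ℕ} (A : Matrix (Fin d) (Fin d) ℝ) {m : ℕ} (hm : 0 < m) :
    frob (A ^ m) ≤ frob A ^ m := by
  rw [frob_eq_norm, frob_eq_norm]
  exact norm_pow_le' A hm

end FrobNorm

set_option maxHeartbeats 1000000 in
/-- Bound on the truncation error of the Taylor-expansion identification algorithm: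
with `w = 𝒩‖A‖Δt·e` and `z = 1 + max(⌊w⌋, q)` (so `z > w`), the tail
`|Σ_{r=q+1}^∞ (p^r Δt^r / r!)(A^r)_{ik}|` is bounded by
`(2π(q+1))^{-1/2} Σ_{r=q+1}^{z-1} (w/r)^r + (w/z)^z / ((2π(q+1))^{1/2}(1 - w/z))`;
in particular the truncation error is finite. -/
theorem stmt17 (d : ℕ) (A : Matrix (Fin d) (Fin d) ℝ) (Δt : ℝ) (hΔt : 0 < Δt)
    (N q p : ℕ) (hN : 1 ≤ N) (hq : 1 ≤ q) (hp1 : 1 ≤ p) (hpN : p ≤ N)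
    (i k : Fin d)
    (w : ℝ) (hw : w = (N : ℝ) * frob A * Δt * Real.exp 1)
    (z : ℕ) (hz : z = 1 + max (Nat.floor w) q) :
    w < (z : ℝ) ∧
    |∑' r : ℕ, (p : ℝ) ^ (r + (q + 1)) * Δt ^ (r + (q + 1))
        / (Nat.factorial (r + (q + 1)) : ℝ) * (A ^ (r + (q + 1))) i k|
      ≤ (Real.sqrt (2 * Real.pi * ((q : ℝ) + 1)))⁻¹
          * ∑ r ∈ Finset.Ico (q + 1) z, (w / (r : ℝ)) ^ r
        + (w / (z : ℝ)) ^ z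
          / (Real.sqrt (2 * Real.pi * ((q : ℝ) + 1)) * (1 - w / (z : ℝ))) := by
  have hπ := Real.pi_pos
  have hfrob : 0 ≤ frob A := Real.sqrt_nonneg _
  have hw0 : 0 ≤ w := by rw [hw]; positivity
  have hzq : q + 1 ≤ z := by
    have := Nat.le_max_right (Nat.floor w) q; omega
  have hz0 : 0 < z := by omega
  have hzR : (0:ℝ) < (z:ℝ) := by exact_mod_cast hz0
  have hwz : w < (z : ℝ) := by
    have h1 : w < (⌊w⌋₊ : ℝ) + 1 := Nat.lt_floor_add_one w
    have h2 : (⌊w⌋₊ + 1 : ℕ) ≤ z := by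
      have := Nat.le_max_left (Nat.floor w) q; omega
    have h3 : ((⌊w⌋₊ + 1 : ℕ) : ℝ) ≤ (z : ℝ) := by exact_mod_cast h2
    push_cast at h3
    linarith
  refine ⟨hwz, ?_⟩
  set S := Real.sqrt (2 * Real.pi * ((q : ℝ) + 1)) with hS
  have hS0 : 0 < S := Real.sqrt_pos.mpr (by positivity)
  have hx0 : 0 ≤ w / z := by positivity
  have hx1 : w / z < 1 := (div_lt_one hzR).mpr hwz
  set c : ℝ := (p : ℝ) * Δt * frob A with hc
  have hc0 : 0 ≤ c := by positivity
  have hce : c * Real.exp 1 ≤ w := by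
    calc c * Real.exp 1 = (p : ℝ) * (frob A * Δt * Real.exp 1) := by rw [hc]; ring
      _ ≤ (N : ℝ) * (frob A * Δt * Real.exp 1) := by
          have hpn : (p:ℝ) ≤ (N:ℝ) := by exact_mod_cast hpN
          have : (0:ℝ) ≤ frob A * Δt * Real.exp 1 := by positivity
          exact mul_le_mul_of_nonneg_right hpn this
      _ = w := by rw [hw]; ring
  -- per-term absolute bound by c^m / m!
  have habs : ∀ m : ℕ, 1 ≤ m →
      |(p : ℝ) ^ m * Δt ^ m / (Nat.factorial m : ℝ) * (A ^ m) i k|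
        ≤ c ^ m / (Nat.factorial m : ℝ) := by
    intro m hm
    have hfacpos : (0:ℝ) < (Nat.factorial m : ℝ) := by exact_mod_cast m.factorial_pos
    have hcoef : 0 ≤ (p : ℝ) ^ m * Δt ^ m / (Nat.factorial m : ℝ) := by positivity
    rw [abs_mul, abs_of_nonneg hcoef]
    have hent : |(A ^ m) i k| ≤ frob A ^ m :=
      (frob_entry_le (A ^ m) i k).trans (frob_pow_le A hm)
    calc (p : ℝ) ^ m * Δt ^ m / (Nat.factorial m : ℝ) * |(A ^ m) i k|
        ≤ (p : ℝ) ^ m * Δt ^ m / (Nat.factorial m : ℝ) * frob A ^ m :=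
          mul_le_mul_of_nonneg_left hent hcoef
      _ = c ^ m / (Nat.factorial m : ℝ) := by
          rw [hc, mul_pow, mul_pow]; ring
  -- per-term bound via Stirling
  have key : ∀ m : ℕ, q + 1 ≤ m →
      |(p : ℝ) ^ m * Δt ^ m / (Nat.factorial m : ℝ) * (A ^ m) i k|
        ≤ S⁻¹ * (w / (m : ℝ)) ^ m := by
    intro m hm
    have hm1 : 1 ≤ m := by omega
    have hmR : (0:ℝ) < (m:ℝ) := by exact_mod_cast hm1
    have hfac := stirling_fact_ge m hm1
    have hsq : 0 < Real.sqrt (2 * Real.pi * (m:ℝ)) := Real.sqrt_pos.mpr (by positivity)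
    have hden : 0 < Real.sqrt (2 * Real.pi * (m:ℝ)) * ((m:ℝ) / Real.exp 1) ^ m := by positivity
    refine (habs m hm1).trans ?_
    have step1 : c ^ m / (Nat.factorial m : ℝ)
        ≤ c ^ m / (Real.sqrt (2 * Real.pi * (m:ℝ)) * ((m:ℝ) / Real.exp 1) ^ m) := by
      gcongr
    refine step1.trans ?_
    have step2 : c ^ m / (Real.sqrt (2 * Real.pi * (m:ℝ)) * ((m:ℝ) / Real.exp 1) ^ m)
        = (Real.sqrt (2 * Real.pi * (m:ℝ)))⁻¹ * (c * Real.exp 1 / (m:ℝ)) ^ m := by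
      calc c ^ m / (Real.sqrt (2 * Real.pi * (m:ℝ)) * ((m:ℝ) / Real.exp 1) ^ m)
          = (Real.sqrt (2 * Real.pi * (m:ℝ)))⁻¹ * (c ^ m / ((m:ℝ) / Real.exp 1) ^ m) := by
            rw [mul_comm, ← div_div, div_eq_mul_inv (b := Real.sqrt (2 * Real.pi * (m:ℝ))),
              mul_comm]
        _ = (Real.sqrt (2 * Real.pi * (m:ℝ)))⁻¹ * (c / ((m:ℝ) / Real.exp 1)) ^ m := by
            rw [div_pow c]
        _ = (Real.sqrt (2 * Real.pi * (m:ℝ)))⁻¹ * (c * Real.exp 1 / (m:ℝ)) ^ m := by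
            rw [div_div_eq_mul_div]
    rw [step2]
    have step3 : (c * Real.exp 1 / (m:ℝ)) ^ m ≤ (w / (m:ℝ)) ^ m := by
      gcongr
    have step4 : (Real.sqrt (2 * Real.pi * (m:ℝ)))⁻¹ ≤ S⁻¹ := by
      apply inv_anti₀ hS0
      apply Real.sqrt_le_sqrt
      have : ((q:ℝ) + 1) ≤ (m:ℝ) := by exact_mod_cast hm
      nlinarith
    calc (Real.sqrt (2 * Real.pi * (m:ℝ)))⁻¹ * (c * Real.exp 1 / (m:ℝ)) ^ m
        ≤ (Real.sqrt (2 * Real.pi * (m:ℝ)))⁻¹ * (w / (m:ℝ)) ^ m := by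
          apply mul_le_mul_of_nonneg_left step3 (by positivity)
      _ ≤ S⁻¹ * (w / (m:ℝ)) ^ m := by
          apply mul_le_mul_of_nonneg_right step4 (by positivity)
  set f : ℕ → ℝ := fun r => (p : ℝ) ^ (r + (q + 1)) * Δt ^ (r + (q + 1))
      / (Nat.factorial (r + (q + 1)) : ℝ) * (A ^ (r + (q + 1))) i k with hf
  have hfs : Summable f := by
    apply Summable.of_norm_bounded
      (g := fun r => c ^ (r + (q + 1)) / (Nat.factorial (r + (q + 1)) : ℝ))
    · exact (summable_nat_add_iff (q + 1)).mpr (Real.summable_pow_div_factorial c)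
    · intro r
      rw [Real.norm_eq_abs]
      exact habs (r + (q + 1)) (by omega)
  set t := z - (q + 1) with ht
  have htz : t + (q + 1) = z := by omega
  -- tail bound function
  set B : ℕ → ℝ := fun r => S⁻¹ * ((w / z) ^ z * (w / z) ^ r) with hB
  have hBs : Summable B :=
    ((summable_geometric_of_lt_one hx0 hx1).mul_left _).mul_left _
  have htail_term : ∀ r : ℕ, |f (r + t)| ≤ B r := by
    intro r
    have hidx : r + t + (q + 1) = r + z := by omega
    have h1 := key (r + t + (q + 1)) (by omega)
    have hfe : f (r + t) = (p : ℝ) ^ (r + t + (q + 1)) * Δt ^ (r + t + (q + 1))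
        / (Nat.factorial (r + t + (q + 1)) : ℝ) * (A ^ (r + t + (q + 1))) i k := rfl
    rw [hfe]
    refine h1.trans ?_
    rw [hB, hidx]
    have hzm : (z:ℝ) ≤ ((r + z : ℕ) : ℝ) := by exact_mod_cast Nat.le_add_left z r
    have h2 : (w / ((r + z : ℕ) : ℝ)) ^ (r + z) ≤ (w / (z:ℝ)) ^ (r + z) := by
      gcongr
    have h3 : (w / (z:ℝ)) ^ (r + z) = (w / z) ^ z * (w / z) ^ r := by
      rw [pow_add]; ring
    calc S⁻¹ * (w / ((r + z : ℕ) : ℝ)) ^ (r + z)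
        ≤ S⁻¹ * (w / (z:ℝ)) ^ (r + z) := by
          apply mul_le_mul_of_nonneg_left h2 (by positivity)
      _ = S⁻¹ * ((w / z) ^ z * (w / z) ^ r) := by rw [h3]
  have habs_tail : Summable fun r => |f (r + t)| := by
    apply Summable.of_nonneg_of_le (fun r => abs_nonneg _) htail_term hBs
  have htsumB : ∑' r, B r = S⁻¹ * ((w / z) ^ z * (1 - w / z)⁻¹) := by
    rw [hB, tsum_mul_left, tsum_mul_left, tsum_geometric_of_lt_one hx0 hx1]
  have hsplit : ∑' r, f r = (∑ r ∈ Finset.range t, f r) + ∑' r, f (r + t) :=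
    (Summable.sum_add_tsum_nat_add t hfs).symm
  rw [hsplit]
  have hineq1 : |(∑ r ∈ Finset.range t, f r) + ∑' r, f (r + t)|
      ≤ (∑ r ∈ Finset.range t, |f r|) + ∑' r, |f (r + t)| := by
    refine (abs_add_le _ _).trans ?_
    gcongr
    · exact Finset.abs_sum_le_sum_abs _ _
    · have := norm_tsum_le_tsum_norm (f := fun r => f (r + t))
        (by simpa [Real.norm_eq_abs] using habs_tail)
      simpa [Real.norm_eq_abs] using this
  refine hineq1.trans ?_
  have hfin : (∑ r ∈ Finset.range t, |f r|)
      ≤ S⁻¹ * ∑ r ∈ Finset.Ico (q + 1) z, (w / (r : ℝ)) ^ r := by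
    rw [Finset.mul_sum]
    have hre : ∑ r ∈ Finset.Ico (q + 1) z, S⁻¹ * (w / (r : ℝ)) ^ r
        = ∑ r ∈ Finset.range t, S⁻¹ * (w / ((r + (q + 1) : ℕ) : ℝ)) ^ (r + (q + 1)) := by
      rw [Finset.sum_Ico_eq_sum_range]
      apply Finset.sum_congr (by rw [ht])
      intro r _
      rw [Nat.add_comm (q + 1) r]
    rw [hre]
    apply Finset.sum_le_sum
    intro r _
    exact key (r + (q + 1)) (by omega)
  have htail : ∑' r, |f (r + t)|
      ≤ (w / (z : ℝ)) ^ z / (S * (1 - w / (z : ℝ))) := by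
    have h1 : ∑' r, |f (r + t)| ≤ ∑' r, B r :=
      Summable.tsum_le_tsum htail_term habs_tail hBs
    rw [htsumB] at h1
    refine h1.trans (le_of_eq ?_)
    rw [div_eq_mul_inv ((w / (z:ℝ)) ^ z), mul_inv]
    ring
  calc (∑ r ∈ Finset.range t, |f r|) + ∑' r, |f (r + t)|
      ≤ S⁻¹ * (∑ r ∈ Finset.Ico (q + 1) z, (w / (r : ℝ)) ^ r)
        + (w / (z : ℝ)) ^ z / (S * (1 - w / (z : ℝ))) := add_le_add hfin htail
end
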